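/- arXiv:2412.14641 — 2 statements merged into one kernel-verified Lean document; each statement's English description precedes it below -/
import Mathlib

section
/- Suppose m is odd. Then f_A(x) is a permutation polynomial of F_{q^2} if and only if i·j is odd and gcd(Q1 + Q2 + 1, q − 1) = 1. -/
/-!
Write `f_A(x) = x ^ s * h (x ^ (q - 1))` with `s = Q1 + Q2 + 1` and `h = fACofactor Q1 Q2`; the
values `x ^ (q - 1)`, `x ≠ 0`, are the `(q + 1)`-th roots of unity `μ`. A prime `r ∣ gcd(s, q - 1)`
gives `f_A(l) = f_A(1)` for `l` of order `r`. In characteristic 2,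
`h z = (z ^ Q1 + z) * (z ^ Q2 + z) + (z ^ 2 + z + 1)`, so `h` vanishes at a primitive cube root of
unity `ω` unless `ω ^ Q1 = ω ^ Q2 = ω ^ 2`, i.e. unless `i` and `j` are odd; as `m` is odd,
`ω ^ (q - 1) = ω`, and then `f_A(ω) = 0 = f_A(0)`.

Conversely, `f_A` is injective once `gcd(s, q - 1) = 1`, `h` has no zero on `μ` and
`g z = z ^ s * h z ^ (q - 1)` is injective on `μ`. For odd `m, i, j` the Frobenius `x ↦ x ^ q` swaps
`ω` and `ω ^ 2`, and each `z ≠ 1` in `μ` is `(a + ω) / (a + ω ^ 2)` with `a ∈ F_q`. Then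
`(a + ω ^ 2) ^ s * h z = N + ω (N + M)` with `N = a ^ s`, `M = (a + 1) ^ s`, so
`g z = (M + ω (N + M)) / (N + ω (N + M))`; two such values agree only if `N M' = N' M`, that is
`(a (b + 1)) ^ s = (b (a + 1)) ^ s`, which forces `a = b` because `s` is prime to `q - 1`.
-/

open Function

section CommGroupWithZero

variable {G₀ : Type*} [CommGroupWithZero G₀]

theorem eq_of_pow_eq_pow_of_coprime {a b : ℕ} (hab : a.Coprime b) (ha : a ≠ 0) {x y : G₀}
    (hxa : x ^ a = y ^ a) (hxb : x ^ b = y ^ b) : x = y := by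
  rcases eq_or_ne y 0 with rfl | hy
  · rwa [zero_pow ha, pow_eq_zero_iff ha] at hxa
  have hy' : ∀ n, y ^ n ≠ 0 := fun n => pow_ne_zero n hy
  have h : (x / y) ^ a.gcd b = 1 := pow_gcd_eq_one.2
    ⟨by rw [div_pow, hxa, div_self (hy' a)], by rw [div_pow, hxb, div_self (hy' b)]⟩
  rwa [hab.gcd_eq_one, pow_one, div_eq_one_iff_eq hy] at h

theorem injOn_pow_of_coprime {s p : ℕ} (hsp : s.Coprime p) (hs : s ≠ 0) :
    Set.InjOn (· ^ s) {x : G₀ | x ^ (p + 1) = x} := by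
  have hfix : ∀ x : G₀, x ^ (p + 1) = x → x ≠ 0 → x ^ p = 1 := fun x hx hx0 =>
    mul_right_cancel₀ hx0 (by rw [← pow_succ, hx, one_mul])
  intro x hx y hy (hxy : x ^ s = y ^ s)
  rcases eq_or_ne x 0 with rfl | hx0
  · rw [zero_pow hs, eq_comm, pow_eq_zero_iff hs] at hxy
    exact hxy.symm
  have hy0 : y ≠ 0 := by
    rintro rfl
    rw [zero_pow hs, pow_eq_zero_iff hs] at hxy
    exact hx0 hxy
  exact eq_of_pow_eq_pow_of_coprime hsp hs hxy (by rw [hfix x hx hx0, hfix y hy hy0])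

end CommGroupWithZero

theorem comp_pow_ne_zero_of_injective {R : Type*} [MonoidWithZero R] [NoZeroDivisors R]
    {s t : ℕ} {h : R → R} (hinj : Injective fun x => x ^ s * h (x ^ t)) (hs : s ≠ 0) {x : R}
    (hx : x ≠ 0) : h (x ^ t) ≠ 0 := fun h0 =>
  hx (hinj (by simp only [h0, mul_zero, zero_pow hs, zero_mul]))

section FiniteField

variable {F : Type*} [Field F] [Fintype F]

theorem pow_sub_one_pow_add_one_eq_one {q : ℕ} (hF : Fintype.card F = q ^ 2) {x : F}
    (hx : x ≠ 0) : (x ^ (q - 1)) ^ (q + 1) = 1 := by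
  rw [← pow_mul, mul_comm, ← Nat.sq_sub_sq, one_pow, ← hF,
    FiniteField.pow_card_sub_one_eq_one x hx]

theorem injective_pow_mul_comp_of_injOn {q s : ℕ} (hF : Fintype.card F = q ^ 2)
    (hs : s.Coprime (q - 1)) (hs0 : s ≠ 0) {h : F → F}
    (hh : ∀ z : F, z ^ (q + 1) = 1 → h z ≠ 0)
    (hg : Set.InjOn (fun z => z ^ s * h z ^ (q - 1)) {z | z ^ (q + 1) = 1}) :
    Injective fun x => x ^ s * h (x ^ (q - 1)) := by
  have hμ : ∀ {x : F}, x ≠ 0 → (x ^ (q - 1)) ^ (q + 1) = 1 := pow_sub_one_pow_add_one_eq_one hF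
  have hf0 : ∀ x : F, x ^ s * h (x ^ (q - 1)) = 0 ↔ x = 0 := fun x =>
    ⟨fun h0 => by_contra fun hx => mul_ne_zero (pow_ne_zero s hx) (hh _ (hμ hx)) h0,
      by rintro rfl; simp [zero_pow hs0]⟩
  intro x y (hxy : x ^ s * h (x ^ (q - 1)) = y ^ s * h (y ^ (q - 1)))
  rcases eq_or_ne x 0 with rfl | hx
  · exact ((hf0 y).1 (hxy.symm.trans ((hf0 0).2 rfl))).symm
  rcases eq_or_ne y 0 with rfl | hy
  · exact (hf0 x).1 (hxy.trans ((hf0 0).2 rfl))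
  -- `(x ^ s * h (x ^ (q - 1))) ^ (q - 1) = z ^ s * h z ^ (q - 1)` with `z = x ^ (q - 1)`
  have hp : x ^ (q - 1) = y ^ (q - 1) := hg (hμ hx) (hμ hy) <| by
    simpa only [mul_pow, pow_right_comm _ s (q - 1)] using congrArg (· ^ (q - 1)) hxy
  have hs' : x ^ s = y ^ s := mul_right_cancel₀ (hh _ (hμ hy)) (by rwa [hp] at hxy)
  exact eq_of_pow_eq_pow_of_coprime hs hs0 hs' hp

theorem not_injective_pow_mul_comp_of_prime_dvd {s t r : ℕ} [Fact r.Prime] (h : F → F)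
    (hrs : r ∣ s) (hrt : r ∣ t) (hr : r ∣ Fintype.card F - 1) :
    ¬ Injective fun x => x ^ s * h (x ^ t) := by
  classical
  obtain ⟨l, hl⟩ := exists_prime_orderOf_dvd_card (G := Fˣ) r (by rwa [Fintype.card_units])
  have hpow : ∀ {n}, r ∣ n → (l : F) ^ n = 1 := fun hn => by
    rw [← Units.val_pow_eq_pow_val, orderOf_dvd_iff_pow_eq_one.1 (hl ▸ hn), Units.val_one]
  have hl1 : (l : F) ≠ 1 := fun h1 =>
    (Fact.out : r.Prime).one_lt.ne' (hl ▸ orderOf_eq_one_iff.2 (Units.val_eq_one.1 h1))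
  exact fun hinj => hl1 (hinj (by simp only [hpow hrs, hpow hrt, one_pow]))

theorem coprime_of_injective_pow_mul_comp {q s : ℕ}
    (hF : Fintype.card F = q ^ 2) {h : F → F}
    (hinj : Injective fun x => x ^ s * h (x ^ (q - 1))) : s.Coprime (q - 1) := by
  by_contra hcop
  obtain ⟨r, hr, hrs, hrq⟩ := Nat.Prime.not_coprime_iff_dvd.1 hcop
  have : Fact r.Prime := ⟨hr⟩
  have hrF : r ∣ Fintype.card F - 1 :=
    hrq.trans (by simpa [hF] using Nat.sub_dvd_pow_sub_pow q 1 2)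
  exact not_injective_pow_mul_comp_of_prime_dvd h hrs hrq hrF hinj

theorem exists_sq_add_self_add_one_eq_zero (h3 : 3 ∣ Fintype.card F - 1) :
    ∃ ω : F, ω ^ 2 + ω + 1 = 0 := by
  classical
  have : Fact (Nat.Prime 3) := ⟨Nat.prime_three⟩
  obtain ⟨u, hu⟩ := exists_prime_orderOf_dvd_card (G := Fˣ) 3 (by rwa [Fintype.card_units])
  refine ⟨u, ?_⟩
  have hu3 : (u : F) ^ 3 = 1 := by
    rw [← Units.val_pow_eq_pow_val, ← hu, pow_orderOf_eq_one, Units.val_one]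
  have hu1 : (u : F) - 1 ≠ 0 := sub_ne_zero.2 fun h1 => by
    rw [Units.val_eq_one.1 h1, orderOf_one] at hu; norm_num at hu
  exact (mul_eq_zero.1 (by linear_combination hu3 : ((u : F) - 1) * _ = 0)).resolve_left hu1

end FiniteField

section Conjugation

variable {F : Type*} [Field F] (σ : F →+* F)

theorem exists_fixed_mul_add_eq (hσ : ∀ x, σ (σ x) = x) {ω z : F} (hz : z * σ z = 1)
    (hz1 : z ≠ 1) :
    ∃ a, σ a = a ∧ z * (a + σ ω) = a + ω := by
  have hz0 : z ≠ 0 := left_ne_zero_of_mul_eq_one hz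
  have hσz : σ z = z⁻¹ := eq_inv_of_mul_eq_one_right hz
  have hz1' : z - 1 ≠ 0 := sub_ne_zero.2 hz1
  have hz1'' : z⁻¹ - 1 ≠ 0 := sub_ne_zero.2 (inv_ne_one.2 hz1)
  refine ⟨(ω - z * σ ω) / (z - 1), ?_, ?_⟩
  · rw [map_div₀, map_sub, map_sub, map_mul, hσ, hσz, map_one, div_eq_div_iff hz1'' hz1']
    field_simp
    ring
  · field_simp
    ring

end Conjugation

theorem Nat.two_pow_mod_three_of_odd {k : ℕ} (hk : Odd k) : 2 ^ k % 3 = 2 := by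
  obtain ⟨t, rfl⟩ := hk
  rw [pow_succ, pow_mul, Nat.mul_mod, Nat.pow_mod]
  norm_num

theorem Nat.two_pow_mod_three_of_even {k : ℕ} (hk : Even k) : 2 ^ k % 3 = 1 := by
  obtain ⟨t, rfl⟩ := hk
  rw [← two_mul, pow_mul, Nat.pow_mod]
  norm_num

section CubeRoot

variable {F : Type*} [Field F] {ω : F}

theorem pow_three_eq_one_of_sq_add_self_add_one (hω : ω ^ 2 + ω + 1 = 0) : ω ^ 3 = 1 := by
  linear_combination (ω - 1) * hω

theorem pow_eq_pow_mod_three (hω : ω ^ 2 + ω + 1 = 0) (n : ℕ) : ω ^ n = ω ^ (n % 3) :=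
  pow_eq_pow_mod n (pow_three_eq_one_of_sq_add_self_add_one hω)

theorem pow_two_pow_of_odd (hω : ω ^ 2 + ω + 1 = 0) {k : ℕ} (hk : Odd k) :
    ω ^ 2 ^ k = ω ^ 2 := by
  rw [pow_eq_pow_mod_three hω, Nat.two_pow_mod_three_of_odd hk]

theorem pow_two_pow_of_even (hω : ω ^ 2 + ω + 1 = 0) {k : ℕ} (hk : Even k) : ω ^ 2 ^ k = ω := by
  rw [pow_eq_pow_mod_three hω, Nat.two_pow_mod_three_of_even hk, pow_one]

theorem pow_two_pow_sub_one_of_odd (hω : ω ^ 2 + ω + 1 = 0) {k : ℕ} (hk : Odd k) :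
    ω ^ (2 ^ k - 1) = ω := by
  have h := Nat.two_pow_mod_three_of_odd hk
  rw [pow_eq_pow_mod_three hω, show (2 ^ k - 1) % 3 = 1 by generalize 2 ^ k = n at h; omega,
    pow_one]

end CubeRoot

def fACofactor {R : Type*} [CommRing R] (Q1 Q2 : ℕ) (z : R) : R :=
  z ^ (Q1 + Q2) + z ^ (Q1 + 1) + z ^ (Q2 + 1) + z + 1

theorem fA_eq_pow_mul_fACofactor {R : Type*} [CommRing R] {q : ℕ} (hq : q ≠ 0) (Q1 Q2 : ℕ)
    (x : R) :
    x ^ (q * (Q1 + Q2) + 1) + x ^ (q * (Q1 + 1) + Q2) + x ^ (q * (Q2 + 1) + Q1) +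
        x ^ (Q1 + Q2 + q) + x ^ (Q1 + Q2 + 1) =
      x ^ (Q1 + Q2 + 1) * fACofactor Q1 Q2 (x ^ (q - 1)) := by
  obtain ⟨p, rfl⟩ : ∃ p, q = p + 1 := ⟨q - 1, by omega⟩
  simp only [fACofactor, Nat.add_sub_cancel]
  ring

theorem pow_mul_fACofactor_of_mul_eq {R : Type*} [CommRing R] (Q1 Q2 : ℕ) {z u v : R}
    (h : z * v = u) :
    v ^ (Q1 + Q2 + 1) * fACofactor Q1 Q2 z =
      u ^ Q1 * u ^ Q2 * v + u ^ Q1 * u * v ^ Q2 + u ^ Q2 * u * v ^ Q1 + u * v ^ Q1 * v ^ Q2 +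
        v ^ Q1 * v ^ Q2 * v := by
  subst h
  unfold fACofactor
  ring

section CharTwo

variable {F : Type*} [Field F] [CharP F 2] {ω : F}

theorem fACofactor_eq (Q1 Q2 : ℕ) (z : F) :
    fACofactor Q1 Q2 z = (z ^ Q1 + z) * (z ^ Q2 + z) + (z ^ 2 + z + 1) := by
  unfold fACofactor
  linear_combination -z ^ 2 * CharTwo.two_eq_zero (R := F)

theorem fACofactor_one (Q1 Q2 : ℕ) : fACofactor Q1 Q2 (1 : F) = 1 := by
  rw [fACofactor_eq, one_pow, one_pow, CharTwo.add_self_eq_zero, zero_mul, zero_add, one_pow,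
    CharTwo.add_self_eq_zero, zero_add]

theorem fACofactor_eq_zero {Q1 Q2 : ℕ} (hω : ω ^ 2 + ω + 1 = 0) (h : ω ^ Q1 = ω ∨ ω ^ Q2 = ω) :
    fACofactor Q1 Q2 ω = 0 := by
  rw [fACofactor_eq, hω, add_zero, mul_eq_zero]
  rcases h with h | h <;> simp [h, CharTwo.add_self_eq_zero]

theorem pow_mul_fACofactor_of_mul_add_sq_eq (hω : ω ^ 2 + ω + 1 = 0) {i j : ℕ} (hi : Odd i)
    (hj : Odd j) {a z : F} (hz : z * (a + ω ^ 2) = a + ω) :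
    (a + ω ^ 2) ^ (2 ^ i + 2 ^ j + 1) * fACofactor (2 ^ i) (2 ^ j) z =
      a ^ (2 ^ i + 2 ^ j + 1) + ω * (a ^ (2 ^ i + 2 ^ j + 1) + (a + 1) ^ (2 ^ i + 2 ^ j + 1)) := by
  have hfrob : ∀ {k}, Odd k → (a + ω) ^ 2 ^ k = a ^ 2 ^ k + ω ^ 2 ∧
      (a + ω ^ 2) ^ 2 ^ k = a ^ 2 ^ k + ω := fun hk => by
    refine ⟨by rw [add_pow_char_pow, pow_two_pow_of_odd hω hk], ?_⟩
    rw [add_pow_char_pow, pow_right_comm, pow_two_pow_of_odd hω hk]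
    linear_combination (ω ^ 2 - ω) * hω
  obtain ⟨hu1, hv1⟩ := hfrob hi
  obtain ⟨hu2, hv2⟩ := hfrob hj
  have ha : a ^ (2 ^ i + 2 ^ j + 1) = a * a ^ 2 ^ i * a ^ 2 ^ j := by ring
  have ha1 : (a + 1) ^ (2 ^ i + 2 ^ j + 1) = (a + 1) * (a ^ 2 ^ i + 1) * (a ^ 2 ^ j + 1) := by
    rw [pow_succ, pow_add, add_pow_char_pow, add_pow_char_pow, one_pow]
    ring
  rw [pow_mul_fACofactor_of_mul_eq _ _ hz, hu1, hu2, hv1, hv2, ha, ha1]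
  generalize a ^ 2 ^ i = A, a ^ 2 ^ j = B
  linear_combination (ω ^ 4 - ω ^ 3 + 3 * ω ^ 2 - ω - 2 + (a + A + B) * (ω ^ 2 + ω) +
      2 * (a * A + a * B + A * B)) * hω +
    (1 + ω - (a + A + B) * ω - (a * A + a * B + A * B) + 2 * a * A * B - a * A * B * ω) *
      CharTwo.two_eq_zero (R := F)

end CharTwo

section Circle

variable {F : Type*} [Field F] [CharP F 2] (σ : F →+* F) {ω : F}

theorem mul_eq_mul_of_add_mul_div_eq {N M N' M' : F} (hd : N + ω * (N + M) ≠ 0)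
    (hd' : N' + ω * (N' + M') ≠ 0)
    (h : (M + ω * (N + M)) / (N + ω * (N + M)) = (M' + ω * (N' + M')) / (N' + ω * (N' + M'))) :
    M * N' = M' * N := by
  rw [div_eq_div_iff hd hd'] at h
  linear_combination h - ω * (M * N' - M' * N) * CharTwo.two_eq_zero (R := F)

theorem map_add_mul_add (hω : ω ^ 2 + ω + 1 = 0) (hσω : σ ω = ω ^ 2) {N M : F} (hN : σ N = N)
    (hM : σ M = M) : σ (N + ω * (N + M)) = M + ω * (N + M) := by
  rw [map_add, map_mul, map_add, hN, hM, hσω]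
  linear_combination (N + M) * hω - (M + ω * (N + M)) * CharTwo.two_eq_zero (R := F)

variable {σ} (hω : ω ^ 2 + ω + 1 = 0) (hσω : σ ω = ω ^ 2) {s : ℕ} (hs : s ≠ 0) {h : F → F}
  (heval : ∀ a z, z * (a + ω ^ 2) = a + ω →
    (a + ω ^ 2) ^ s * h z = a ^ s + ω * (a ^ s + (a + 1) ^ s))
include hω hσω hs heval

theorem pow_mul_map_div_eq_of_mul_add_sq_eq {a z : F} (ha : σ a = a)
    (hza : z * (a + ω ^ 2) = a + ω) :
    a ^ s + ω * (a ^ s + (a + 1) ^ s) ≠ 0 ∧ h z ≠ 0 ∧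
      z ^ s * σ (h z) / h z =
        ((a + 1) ^ s + ω * (a ^ s + (a + 1) ^ s)) / (a ^ s + ω * (a ^ s + (a + 1) ^ s)) := by
  have hE := heval a z hza
  set N := a ^ s
  set M := (a + 1) ^ s
  have hσN : σ N = N := by rw [map_pow, ha]
  have hσM : σ M = M := by rw [map_pow, map_add, ha, map_one]
  have hNM : N + ω * (N + M) ≠ 0 := fun h0 => by
    have h1 := map_add_mul_add σ hω hσω hσN hσM
    rw [h0, map_zero] at h1
    have hNM : N = M := by linear_combination h0 + h1
    have hN0 : N = 0 := by
      linear_combination h0 - ω * hNM - ω * M * CharTwo.two_eq_zero (R := F)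
    have ha0 : a = 0 := (pow_eq_zero_iff hs).1 hN0
    rw [hNM] at hN0
    simpa [ha0] using (pow_eq_zero_iff hs).1 hN0
  have hh : h z ≠ 0 := fun h0 => hNM (by rw [← hE, h0, mul_zero])
  have hσE : (a + ω) ^ s * σ (h z) = M + ω * (N + M) := by
    have hσv : σ (a + ω ^ 2) = a + ω := by
      rw [map_add, map_pow, ha, hσω]
      linear_combination (ω ^ 2 - ω) * hω
    rw [← hσv, ← map_pow, ← map_mul, hE, map_add_mul_add σ hω hσω hσN hσM]
  refine ⟨hNM, hh, ?_⟩
  rw [div_eq_div_iff hh hNM, ← hE, ← hσE, ← hza, mul_pow]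
  ring

variable (hσ : ∀ x, σ (σ x) = x) (h1 : h 1 = 1)
include hσ h1

theorem ne_zero_of_mul_map_eq_one {z : F} (hz : z * σ z = 1) : h z ≠ 0 := by
  rcases eq_or_ne z 1 with rfl | hz1
  · rw [h1]
    exact one_ne_zero
  obtain ⟨a, ha, hza⟩ := exists_fixed_mul_add_eq σ hσ (ω := ω) hz hz1
  exact (pow_mul_map_div_eq_of_mul_add_sq_eq hω hσω hs heval ha (hσω ▸ hza)).2.1

theorem injOn_pow_mul_map_div (hinj : Set.InjOn (· ^ s) {a | σ a = a}) :
    Set.InjOn (fun z => z ^ s * σ (h z) / h z) {z | z * σ z = 1} := by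
  have hparam : ∀ {z}, z * σ z = 1 → z ≠ 1 → ∃ a, σ a = a ∧ z * (a + ω ^ 2) = a + ω :=
    fun hz hz1 => hσω ▸ exists_fixed_mul_add_eq σ hσ hz hz1
  have hfix1 : ∀ {a}, σ a = a → σ (a + 1) = a + 1 := fun ha => by rw [map_add, ha, map_one]
  have hne : ∀ {z}, z * σ z = 1 → z ≠ 1 → z ^ s * σ (h z) / h z ≠ 1 := fun hz hz1 hg => by
    obtain ⟨a, ha, hza⟩ := hparam hz hz1
    obtain ⟨hNM, -, heq⟩ := pow_mul_map_div_eq_of_mul_add_sq_eq hω hσω hs heval ha hza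
    rw [heq, div_eq_one_iff_eq hNM, add_left_inj] at hg
    exact one_ne_zero (add_eq_left.1 (hinj (hfix1 ha) ha hg))
  have hg1 : (1 : F) ^ s * σ (h 1) / h 1 = 1 := by simp [h1]
  intro z (hz : z * σ z = 1) w (hw : w * σ w = 1) hzw
  rcases eq_or_ne z 1 with rfl | hz1 <;> rcases eq_or_ne w 1 with rfl | hw1
  · rfl
  · exact absurd (hzw.symm.trans hg1) (hne hw hw1)
  · exact absurd (hzw.trans hg1) (hne hz hz1)
  obtain ⟨a, ha, hza⟩ := hparam hz hz1
  obtain ⟨b, hb, hwb⟩ := hparam hw hw1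
  obtain ⟨hda, -, hza'⟩ := pow_mul_map_div_eq_of_mul_add_sq_eq hω hσω hs heval ha hza
  obtain ⟨hdb, -, hwb'⟩ := pow_mul_map_div_eq_of_mul_add_sq_eq hω hσω hs heval hb hwb
  have hab := mul_eq_mul_of_add_mul_div_eq hda hdb (hza' ▸ hwb' ▸ hzw)
  rw [← mul_pow, ← mul_pow] at hab
  have hab' : (a + 1) * b = (b + 1) * a :=
    hinj (by simp [ha, hb]) (by simp [ha, hb]) hab
  obtain rfl : a = b := by linear_combination -hab'
  have hv : a + ω ^ 2 ≠ 0 :=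
    (pow_ne_zero_iff hs).1 (left_ne_zero_of_mul (heval a z hza ▸ hda))
  exact mul_right_cancel₀ hv (hza.trans hwb.symm)

end Circle

theorem odd_mul_of_fACofactor_ne_zero {F : Type*} [Field F] [CharP F 2] {ω : F}
    (hω : ω ^ 2 + ω + 1 = 0) {i j : ℕ} (h : fACofactor (2 ^ i) (2 ^ j) ω ≠ 0) : Odd (i * j) := by
  by_contra hij
  rw [Nat.odd_mul, not_and_or, Nat.not_odd_iff_even, Nat.not_odd_iff_even] at hij
  exact h (fACofactor_eq_zero hω (hij.imp (pow_two_pow_of_even hω) (pow_two_pow_of_even hω)))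

theorem injective_pow_mul_fACofactor {F : Type*} [Field F] [Fintype F] [CharP F 2] {m i j : ℕ}
    (hF : Fintype.card F = (2 ^ m) ^ 2) (hm : Odd m) (hi : Odd i) (hj : Odd j) {ω : F}
    (hω : ω ^ 2 + ω + 1 = 0) (hs : (2 ^ i + 2 ^ j + 1).Coprime (2 ^ m - 1)) :
    Injective fun x : F =>
      x ^ (2 ^ i + 2 ^ j + 1) * fACofactor (2 ^ i) (2 ^ j) (x ^ (2 ^ m - 1)) := by
  set σ := iterateFrobenius F 2 m
  have hσ : ∀ x, σ (σ x) = x := fun x => by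
    rw [iterateFrobenius_def, iterateFrobenius_def, ← pow_mul, ← sq, ← hF, FiniteField.pow_card]
  have hσω : σ ω = ω ^ 2 := pow_two_pow_of_odd hω hm
  have hs0 : 2 ^ i + 2 ^ j + 1 ≠ 0 := by positivity
  have heval := fun a z => pow_mul_fACofactor_of_mul_add_sq_eq (a := a) (z := z) hω hi hj
  have hfix : Set.InjOn (· ^ (2 ^ i + 2 ^ j + 1)) {a | σ a = a} := by
    refine (injOn_pow_of_coprime hs hs0).mono fun a ha => ?_
    rwa [Set.mem_ofPred, iterateFrobenius_def,
      ← Nat.sub_add_cancel (Nat.one_le_two_pow (n := m))] at ha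
  have hμ : ∀ {z : F}, z ^ (2 ^ m + 1) = 1 → z * σ z = 1 := fun hz => by
    rwa [iterateFrobenius_def, ← pow_succ']
  have hne : ∀ {z : F}, z ^ (2 ^ m + 1) = 1 → fACofactor (2 ^ i) (2 ^ j) z ≠ 0 := fun hz =>
    ne_zero_of_mul_map_eq_one hω hσω hs0 heval hσ (fACofactor_one _ _) (hμ hz)
  refine injective_pow_mul_comp_of_injOn hF hs hs0 (fun z hz => hne hz) fun z hz w hw hzw => ?_
  have hg : ∀ {z : F}, z ^ (2 ^ m + 1) = 1 →
      z ^ (2 ^ i + 2 ^ j + 1) * fACofactor (2 ^ i) (2 ^ j) z ^ (2 ^ m - 1) =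
        z ^ (2 ^ i + 2 ^ j + 1) * σ (fACofactor (2 ^ i) (2 ^ j) z) / fACofactor (2 ^ i) (2 ^ j) z :=
    fun hz => by
      rw [iterateFrobenius_def, pow_sub₀ _ (hne hz) Nat.one_le_two_pow, pow_one]
      ring
  exact injOn_pow_mul_map_div hω hσω hs0 heval hσ (fACofactor_one _ _) hfix (hμ hz) (hμ hw)
    (by simpa only [hg hz, hg hw] using hzw)

theorem fA_perm_iff_of_odd_general
    (m i j : ℕ)
    (q Q1 Q2 : ℕ) (hq : q = 2 ^ m) (hQ1 : Q1 = 2 ^ i) (hQ2 : Q2 = 2 ^ j)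
    (F : Type*) [Field F] [Fintype F] (hF : Fintype.card F = q ^ 2)
    (hmo : Odd m) :
    Function.Bijective (fun x : F =>
      x ^ (q * (Q1 + Q2) + 1) + x ^ (q * (Q1 + 1) + Q2) + x ^ (q * (Q2 + 1) + Q1) +
        x ^ (Q1 + Q2 + q) + x ^ (Q1 + Q2 + 1)) ↔
      (Odd (i * j) ∧ Nat.gcd (Q1 + Q2 + 1) (q - 1) = 1) := by
  subst hq hQ1 hQ2
  have : CharP F 2 := charP_of_card_eq_prime_pow (by rw [hF, ← pow_mul])
  obtain ⟨ω, hω⟩ := exists_sq_add_self_add_one_eq_zero (F := F) <| by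
    rw [hF, ← pow_mul, mul_comm, pow_mul]
    have h3 := Nat.sub_dvd_pow_sub_pow 4 1 m
    norm_num at h3 ⊢
    exact h3
  simp_rw [fA_eq_pow_mul_fACofactor (pow_ne_zero m two_ne_zero),
    ← Finite.injective_iff_bijective]
  refine ⟨fun hinj => ⟨?_, coprime_of_injective_pow_mul_comp hF hinj⟩, fun ⟨hij, hs⟩ => ?_⟩
  · apply odd_mul_of_fACofactor_ne_zero hω
    have hω0 : ω ≠ 0 := fun h0 => by simp [h0] at hω
    simpa [pow_two_pow_sub_one_of_odd hω hmo] using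
      comp_pow_ne_zero_of_injective hinj (by positivity) hω0
  · obtain ⟨hi, hj⟩ := Nat.odd_mul.1 hij
    exact injective_pow_mul_fACofactor hF hmo hi hj hω hs

/-- Theorem A, case (i): for `m` odd, `f_A` permutes `F_{q^2}` iff `i·j` is odd
and `gcd(Q1 + Q2 + 1, q - 1) = 1`. -/
theorem fA_perm_iff_of_odd
    (m i j : ℕ) (hm : 0 < m) (hi : 0 < i) (hj : 0 < j)
    (q Q1 Q2 : ℕ) (hq : q = 2 ^ m) (hQ1 : Q1 = 2 ^ i) (hQ2 : Q2 = 2 ^ j)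
    (F : Type*) [Field F] [Fintype F] (hF : Fintype.card F = q ^ 2)
    (hmo : Odd m) :
    Function.Bijective (fun x : F =>
      x ^ (q * (Q1 + Q2) + 1) + x ^ (q * (Q1 + 1) + Q2) + x ^ (q * (Q2 + 1) + Q1) +
        x ^ (Q1 + Q2 + q) + x ^ (Q1 + Q2 + 1)) ↔
      (Odd (i * j) ∧ Nat.gcd (Q1 + Q2 + 1) (q - 1) = 1) :=
  fA_perm_iff_of_odd_general m i j q Q1 Q2 hq hQ1 hQ2 F hF hmo
end

section
/- Suppose m is odd and i and j are both even. Then f_C is linear equivalent over F_q to the map (u,v) ↦ (u^{Q1+Q2+1}, v^{Q1+Q2+1}) on F_q × F_q; that is, there exist F_q-linear bijections L1 : F_q × F_q → F_{q^2} and L2 : F_{q^2} → F_q × F_q such that for all x in F_{q^2}, f_C(x) = L1(u^{Q1+Q2+1}, v^{Q1+Q2+1}) where (u,v) = L2(x). -/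
/-!
Since `m` is odd, `q ≡ 2` and `Q1 ≡ Q2 ≡ 1 (mod 3)`, so `F_{q^2}` contains a primitive cube
root of unity `ω` that does not lie in `F_q`, and `(ω, ω²)` is an `F_q`-basis of `F_{q^2}`.
In these coordinates `x ↦ x^q` swaps the two coordinates, while `x ↦ x^{Q1}` and `x ↦ x^{Q2}`
act coordinatewise. Expanding `f_C(uω + vω²)` and using `ω³ = 1`, `ω + ω² = 1` (characteristic
`2`) leaves `u^{Q1+Q2+1} ω + v^{Q1+Q2+1} ω²`.
-/

theorem Nat.two_pow_mod_three_of_odd_s11 {m : ℕ} (hm : Odd m) : 2 ^ m % 3 = 2 := by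
  obtain ⟨k, rfl⟩ := hm
  rw [pow_succ, pow_mul, Nat.mul_mod, Nat.pow_mod]
  norm_num

theorem Nat.two_pow_mod_three_of_even_s11 {m : ℕ} (hm : Even m) : 2 ^ m % 3 = 1 := by
  obtain ⟨k, rfl⟩ := hm
  rw [← two_mul, pow_mul, Nat.pow_mod]
  norm_num

theorem FiniteField.exists_isPrimitiveRoot_of_dvd_card_sub_one {F : Type*} [Field F] [Fintype F]
    {p : ℕ} [Fact p.Prime] (hp : p ∣ Fintype.card F - 1) : ∃ ω : F, IsPrimitiveRoot ω p := by
  classical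
  rw [← Fintype.card_units] at hp
  obtain ⟨ζ, hζ⟩ := exists_prime_orderOf_dvd_card p hp
  exact ⟨ζ, IsPrimitiveRoot.coe_units_iff.mpr (hζ ▸ IsPrimitiveRoot.orderOf ζ)⟩

theorem IsPrimitiveRoot.dvd_card_sub_one {K : Type*} [Field K] [Fintype K] {ζ : K} {k : ℕ}
    (hζ : IsPrimitiveRoot ζ k) (hk : k ≠ 0) : k ∣ Fintype.card K - 1 :=
  (hζ.pow_eq_one_iff_dvd _).mp (FiniteField.pow_card_sub_one_eq_one ζ (hζ.ne_zero hk))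

namespace IsPrimitiveRoot

variable {R : Type*} [CommRing R] {ω : R}

theorem pow_two_pow_of_odd (hω : IsPrimitiveRoot ω 3) {m : ℕ} (hm : Odd m) :
    ω ^ 2 ^ m = ω ^ 2 := by
  rw [← pow_mod_orderOf, ← hω.eq_orderOf, Nat.two_pow_mod_three_of_odd_s11 hm]

theorem pow_two_pow_of_even (hω : IsPrimitiveRoot ω 3) {m : ℕ} (hm : Even m) :
    ω ^ 2 ^ m = ω := by
  rw [← pow_mod_orderOf, ← hω.eq_orderOf, Nat.two_pow_mod_three_of_even_s11 hm, pow_one]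

variable [CharP R 2]

theorem mul_add_mul_sq_pow_two_pow_of_even (hω : IsPrimitiveRoot ω 3) {m : ℕ} (hm : Even m)
    (U V : R) : (U * ω + V * ω ^ 2) ^ 2 ^ m = U ^ 2 ^ m * ω + V ^ 2 ^ m * ω ^ 2 := by
  rw [add_pow_char_pow, mul_pow, mul_pow, ← pow_mul, mul_comm 2, pow_mul,
    hω.pow_two_pow_of_even hm]

theorem mul_add_mul_sq_pow_two_pow_of_odd (hω : IsPrimitiveRoot ω 3) {m : ℕ} (hm : Odd m)
    (U V : R) : (U * ω + V * ω ^ 2) ^ 2 ^ m = V ^ 2 ^ m * ω + U ^ 2 ^ m * ω ^ 2 := by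
  rw [add_pow_char_pow, mul_pow, mul_pow, ← pow_mul, mul_comm 2, pow_mul,
    hω.pow_two_pow_of_odd hm, ← pow_mul, show 2 * 2 = 3 + 1 from rfl, pow_succ ω 3, hω.pow_eq_one,
    one_mul, add_comm]

end IsPrimitiveRoot

def fC {R : Type*} [Semiring R] (q Q1 Q2 : ℕ) (x : R) : R :=
  x ^ (q * (Q1 + Q2 + 1)) + x ^ (q * Q1 + Q2 + 1) + x ^ (q * Q2 + Q1 + 1) +
    x ^ (q + Q1 + Q2) + x ^ (Q1 + Q2 + 1)

/-- With `a = Aω + Bω²` and its conjugate `ā = Bω + Aω²` (and likewise for `b`, `c`), the left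
side is `ā b̄ c̄ + ā b c + a b̄ c + a b c̄ + a b c`. -/
theorem fC_trilinear_identity {R : Type*} [CommRing R] [CharP R 2] {ω : R}
    (hω : ω ^ 2 + ω + 1 = 0) (A B C D U V : R) :
    (B*ω + A*ω^2) * (D*ω + C*ω^2) * (V*ω + U*ω^2) + (B*ω + A*ω^2) * (C*ω + D*ω^2) * (U*ω + V*ω^2)
      + (D*ω + C*ω^2) * (A*ω + B*ω^2) * (U*ω + V*ω^2)
      + (V*ω + U*ω^2) * (A*ω + B*ω^2) * (C*ω + D*ω^2)
      + (A*ω + B*ω^2) * (C*ω + D*ω^2) * (U*ω + V*ω^2)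
    = A*C*U*ω + B*D*V*ω^2 := by
  grind

theorem fC_mul_add_mul_sq {R : Type*} [CommRing R] [IsDomain R] [CharP R 2] {ω : R}
    (hω : IsPrimitiveRoot ω 3) {m i j : ℕ} (hm : Odd m) (hi : Even i) (hj : Even j) {U V : R}
    (hU : U ^ 2 ^ m = U) (hV : V ^ 2 ^ m = V) :
    fC (2 ^ m) (2 ^ i) (2 ^ j) (U * ω + V * ω ^ 2) =
      U ^ (2 ^ i + 2 ^ j + 1) * ω + V ^ (2 ^ i + 2 ^ j + 1) * ω ^ 2 := by
  have hw : ω ^ 2 + ω + 1 = 0 := by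
    rw [← hω.geom_sum_eq_zero (by norm_num)]
    simp only [Finset.sum_range_succ, Finset.sum_range_zero]
    ring
  have hconj : (U * ω + V * ω ^ 2) ^ 2 ^ m = V * ω + U * ω ^ 2 := by
    rw [hω.mul_add_mul_sq_pow_two_pow_of_odd hm, hU, hV]
  simp only [fC, pow_mul, pow_add, pow_one, hconj, hω.mul_add_mul_sq_pow_two_pow_of_even hi,
    hω.mul_add_mul_sq_pow_two_pow_of_even hj]
  exact fC_trilinear_identity hw _ _ _ _ _ _

theorem bijective_coprod_toSpanSingleton_sq {K F : Type*} [Field K] [Fintype K] [Field F]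
    [Fintype F] [Algebra K F] (hF : Fintype.card F = Fintype.card K ^ 2) {ω : F}
    (hω : ω ∉ Set.range (algebraMap K F)) :
    Function.Bijective
      ((LinearMap.toSpanSingleton K F ω).coprod (LinearMap.toSpanSingleton K F (ω ^ 2))) := by
  refine (Fintype.bijective_iff_injective_and_card _).mpr ⟨?_, by simp [hF, sq]⟩
  rw [injective_iff_map_eq_zero]
  rintro ⟨u, v⟩ h
  simp only [LinearMap.coprod_apply, LinearMap.toSpanSingleton_apply, Algebra.smul_def] at h
  have hω0 : ω ≠ 0 := fun h0 => hω ⟨0, by rw [h0, map_zero]⟩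
  have huv : algebraMap K F u + algebraMap K F v * ω = 0 :=
    mul_left_cancel₀ hω0 (by linear_combination h)
  obtain rfl : v = 0 := by
    by_contra hv
    exact hω ⟨-u / v, by
      rw [map_div₀, map_neg, div_eq_iff (by simpa using hv)]
      linear_combination -huv⟩
  simpa using huv

theorem fC_linear_equiv_of_odd_general
    (m i j : ℕ)
    (q Q1 Q2 : ℕ) (hq : q = 2 ^ m) (hQ1 : Q1 = 2 ^ i) (hQ2 : Q2 = 2 ^ j)
    (K F : Type*) [Field K] [Fintype K] [Field F] [Fintype F] [Algebra K F]
    (hK : Fintype.card K = q) (hF : Fintype.card F = q ^ 2)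
    (hmo : Odd m) (hie : Even i) (hje : Even j) :
    ∃ (L1 : (K × K) ≃ₗ[K] F) (L2 : F ≃ₗ[K] (K × K)),
      ∀ x : F,
        x ^ (q * (Q1 + Q2 + 1)) + x ^ (q * Q1 + Q2 + 1) + x ^ (q * Q2 + Q1 + 1) +
          x ^ (q + Q1 + Q2) + x ^ (Q1 + Q2 + 1) =
        L1 ((L2 x).1 ^ (Q1 + Q2 + 1), (L2 x).2 ^ (Q1 + Q2 + 1)) := by
  subst hq hQ1 hQ2
  have : CharP F 2 := charP_of_card_eq_prime_pow (hF.trans (pow_mul 2 m 2).symm)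
  have : Fact (Nat.Prime 3) := ⟨Nat.prime_three⟩
  obtain ⟨ω, hω⟩ := FiniteField.exists_isPrimitiveRoot_of_dvd_card_sub_one (F := F) (p := 3) (by
    rw [hF, ← pow_mul, mul_comm, pow_mul]
    exact Nat.sub_one_dvd_pow_sub_one 4 m)
  have hωK : ω ∉ Set.range (algebraMap K F) := by
    rintro ⟨c, rfl⟩
    have h3 := (hω.of_map_of_injective (algebraMap K F).injective).dvd_card_sub_one
      three_ne_zero
    rw [hK] at h3
    have hq3 := Nat.two_pow_mod_three_of_odd_s11 hmo
    omega
  let L := LinearEquiv.ofBijective _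
    (bijective_coprod_toSpanSingleton_sq (hF.trans (by rw [hK])) hωK)
  have hL (p : K × K) : L p = algebraMap K F p.1 * ω + algebraMap K F p.2 * ω ^ 2 := by
    simp [L, Algebra.smul_def]
  have hfix (c : K) : algebraMap K F c ^ 2 ^ m = algebraMap K F c := by
    rw [← map_pow, ← hK, FiniteField.pow_card]
  refine ⟨L, L.symm, fun x => ?_⟩
  obtain ⟨⟨u, v⟩, rfl⟩ := L.surjective x
  rw [L.symm_apply_apply, hL, hL]
  simp only [map_pow]
  exact fC_mul_add_mul_sq hω hmo hie hje (hfix u) (hfix v)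

/-- Theorem C, case (i), linear equivalence part: for `m` odd and `i`, `j` both even,
`f_C` is linear equivalent over `F_q` to `(u, v) ↦ (u^{Q1+Q2+1}, v^{Q1+Q2+1})`
on `F_q × F_q`. -/
theorem fC_linear_equiv_of_odd
    (m i j : ℕ) (hm : 0 < m) (hi : 0 < i) (hj : 0 < j)
    (q Q1 Q2 : ℕ) (hq : q = 2 ^ m) (hQ1 : Q1 = 2 ^ i) (hQ2 : Q2 = 2 ^ j)
    (K F : Type*) [Field K] [Fintype K] [Field F] [Fintype F] [Algebra K F]
    (hK : Fintype.card K = q) (hF : Fintype.card F = q ^ 2)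
    (hmo : Odd m) (hie : Even i) (hje : Even j) :
    ∃ (L1 : (K × K) ≃ₗ[K] F) (L2 : F ≃ₗ[K] (K × K)),
      ∀ x : F,
        x ^ (q * (Q1 + Q2 + 1)) + x ^ (q * Q1 + Q2 + 1) + x ^ (q * Q2 + Q1 + 1) +
          x ^ (q + Q1 + Q2) + x ^ (Q1 + Q2 + 1) =
        L1 ((L2 x).1 ^ (Q1 + Q2 + 1), (L2 x).2 ^ (Q1 + Q2 + 1)) :=
  fC_linear_equiv_of_odd_general m i j q Q1 Q2 hq hQ1 hQ2 K F hK hF hmo hie hje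
end
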